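/- arXiv:2311.17718 — 5 statements merged into one kernel-verified Lean document; each statement's English description precedes it below -/
import Mathlib

section
/- Let Ω be a Jordan domain with analytic boundary Γ, f analytic on the closure of Ω with u = Re f solving the Dirichlet problem with boundary data h, where h is analytic on a reflection-invariant neighborhood U of Γ and real-valued on Γ. If h is analytic in the part of U exterior to Γ, then f extends analytically to the part of U exterior to Γ. -/
open Complex

/-- `Γ` is an analytic Jordan curve: the injective image of the unit circle under a
function analytic on a neighborhood of the circle with nonvanishing derivative. -/
def IsAnalyticJordanCurve (Γ : Set ℂ) : Prop :=
  ∃ φ : ℂ → ℂ, AnalyticOnNhd ℂ φ (Metric.sphere 0 1) ∧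
    (∀ w ∈ Metric.sphere (0 : ℂ) 1, deriv φ w ≠ 0) ∧
    Set.InjOn φ (Metric.sphere 0 1) ∧ Γ = φ '' Metric.sphere 0 1

/-!
With `σ = conj ∘ S`, an anticonformal involution of `U` fixing `Γ`, the function
`G = h + conj (h ∘ σ) - conj (f ∘ σ)` agrees with `f` on `Γ`. In the chart
`ζ ↦ φ (w₀ exp ζ)`, which straightens `Γ` near `φ w₀` to the imaginary axis, the identity theorem
gives `f = G` near `Γ`, and `σ` becomes `ζ ↦ -conj ζ`, so it swaps the two sides of `Γ` locally.
Since every component of `U \ Γ` abuts `Γ` (`U` is connected), `σ` maps all of `U \ closure Ω`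
into `Ω`, where `f` is analytic; hence `G` is analytic there and continues `f`.
-/

open Filter Set Metric
open scoped Topology ComplexConjugate

theorem IsPreconnected.subset_of_disjoint_frontier {X : Type*} [TopologicalSpace X]
    {T s : Set X} (hT : IsPreconnected T) (hs : IsOpen s) (hTs : Disjoint T (frontier s))
    (hne : (T ∩ s).Nonempty) : T ⊆ s :=
  hT.subset_of_closure_inter_subset hs hne fun _ ⟨hxc, hxT⟩ =>
    by_contra fun hxs => hTs.notMem_of_mem_left hxT (hs.frontier_eq ▸ ⟨hxc, hxs⟩)

theorem exists_mem_closure_connectedComponentIn_sdiff {X : Type*} [TopologicalSpace X]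
    [LocallyConnectedSpace X] {U K : Set X} (hU : IsPreconnected U) (hUo : IsOpen U)
    (hK : IsClosed K) (hKU : (K ∩ U).Nonempty) {z : X} (hz : z ∈ U \ K) :
    ∃ γ ∈ K, γ ∈ closure (connectedComponentIn (U \ K) z) := by
  by_contra! h
  have hopen : IsOpen (U \ K) := hUo.sdiff hK
  have hUC : U ⊆ connectedComponentIn (U \ K) z := by
    refine hU.subset_of_closure_inter_subset hopen.connectedComponentIn
      ⟨z, hz.1, mem_connectedComponentIn hz⟩ fun p ⟨hpC, hpU⟩ => ?_
    have hp : p ∈ U \ K := ⟨hpU, fun hpK => h p hpK hpC⟩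
    obtain ⟨q, hqp, hqz⟩ := mem_closure_iff_nhds.mp hpC _
      (hopen.connectedComponentIn.mem_nhds (mem_connectedComponentIn hp))
    rw [connectedComponentIn_eq hqz, ← connectedComponentIn_eq hqp]
    exact mem_connectedComponentIn hp
  obtain ⟨k, hkK, hkU⟩ := hKU
  exact (connectedComponentIn_subset _ _ (hUC hkU)).2 hkK

theorem frontier_compl_closure_subset {X : Type*} [TopologicalSpace X] (s : Set X) :
    frontier (closure s)ᶜ ⊆ frontier s :=
  frontier_compl (closure s) ▸ frontier_closure_subset

theorem mem_of_involution_of_eventually_mem {X : Type*} [TopologicalSpace X]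
    [LocallyConnectedSpace X] {Ω U : Set X} {σ : X → X} (hΩ : IsOpen Ω) (hU : IsOpen U)
    (hUconn : IsPreconnected U) (hUfr : frontier Ω ⊆ U) (hfr : (frontier Ω).Nonempty)
    (hσ : ContinuousOn σ U) (hσσ : ∀ z ∈ U, σ (σ z) = z) (hσfr : ∀ z ∈ frontier Ω, σ z = z)
    (hloc : ∀ γ ∈ frontier Ω, ∀ᶠ z in 𝓝 γ, z ∉ closure Ω → σ z ∈ Ω)
    {z : X} (hzU : z ∈ U) (hz : z ∉ closure Ω) : σ z ∈ Ω := by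
  set C := connectedComponentIn (U \ frontier Ω) z
  have hzC : z ∈ C := mem_connectedComponentIn ⟨hzU, fun h => hz (frontier_subset_closure h)⟩
  have hCsub : C ⊆ U \ frontier Ω := connectedComponentIn_subset _ _
  have hCext : C ⊆ (closure Ω)ᶜ :=
    isPreconnected_connectedComponentIn.subset_of_disjoint_frontier isClosed_closure.isOpen_compl
      (disjoint_left.mpr fun _ hx hx' => (hCsub hx).2 (frontier_compl_closure_subset Ω hx'))
      ⟨z, hzC, hz⟩
  obtain ⟨γ, hγ, hγC⟩ := exists_mem_closure_connectedComponentIn_sdiff hUconn hU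
    isClosed_frontier (hfr.mono fun x hx => ⟨hx, hUfr hx⟩) ⟨hzU, hzC |> hCsub |>.2⟩
  obtain ⟨z', hz'C, hz'⟩ := ((mem_closure_iff_frequently.mp hγC).and_eventually (hloc γ hγ)).exists
  have hσC : σ '' C ⊆ Ω := by
    refine (isPreconnected_connectedComponentIn.image σ (hσ.mono fun x hx => (hCsub hx).1))
      |>.subset_of_disjoint_frontier hΩ ?_ ⟨σ z', mem_image_of_mem σ hz'C, hz' (hCext hz'C)⟩
    refine disjoint_left.mpr ?_
    rintro _ ⟨x, hx, rfl⟩ hσx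
    have hfix : x = σ x := (hσσ x (hCsub hx).1).symm.trans (hσfr _ hσx)
    rw [← hfix] at hσx
    exact (hCsub hx).2 hσx
  exact hσC (mem_image_of_mem σ hzC)

theorem IsCompact.eventually_mem_of_injOn {X Y : Type*} [TopologicalSpace X]
    [TopologicalSpace Y] [T2Space Y] {K O : Set X} {φ : X → Y} {w : X} (hK : IsCompact K)
    (hφ : ContinuousOn φ K) (hinj : InjOn φ K) (hw : w ∈ K) (hO : O ∈ 𝓝 w) :
    ∀ᶠ z in 𝓝 (φ w), ∀ v ∈ K, φ v = z → v ∈ O := by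
  have hclosed : IsClosed (φ '' (K \ interior O)) :=
    ((hK.diff isOpen_interior).image_of_continuousOn (hφ.mono sdiff_subset)).isClosed
  have hw' : φ w ∉ φ '' (K \ interior O) := by
    rintro ⟨v, ⟨hvK, hvO⟩, hv⟩
    exact hvO (hinj hvK hw hv ▸ mem_interior_iff_mem_nhds.mpr hO)
  filter_upwards [hclosed.isOpen_compl.mem_nhds hw'] with z hz v hvK rfl
  by_contra hvO
  exact hz ⟨v, ⟨hvK, fun h => hvO (interior_subset h)⟩, rfl⟩

theorem AnalyticAt.conj_conj {g : ℂ → ℂ} {x : ℂ} (hg : AnalyticAt ℂ g x) :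
    AnalyticAt ℂ (conj ∘ g ∘ conj) (conj x) := by
  rw [analyticAt_iff_eventually_differentiableAt]
  have hconj : Tendsto conj (𝓝 (conj x)) (𝓝 x) := by
    simpa using continuous_conj.tendsto (conj x)
  filter_upwards [hconj.eventually hg.eventually_analyticAt] with y hy
  simpa using hy.differentiableAt.conj_conj

lemma frequently_re_eq_zero_nhdsNE : ∃ᶠ ζ in 𝓝[≠] (0 : ℂ), ζ.re = 0 := by
  have h : Tendsto (fun t : ℝ => (t : ℂ) * I) (𝓝[≠] 0) (𝓝[≠] 0) := by
    refine tendsto_nhdsWithin_of_tendsto_nhds_of_eventually_within _ ?_ ?_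
    · have hc : Continuous fun t : ℝ => (t : ℂ) * I := by fun_prop
      exact (hc.tendsto' 0 0 (by simp)).mono_left nhdsWithin_le_nhds
    · filter_upwards [self_mem_nhdsWithin] with t ht
      simpa using ht
  exact h.frequently (Frequently.of_forall fun t => by simp)

theorem AnalyticAt.eventuallyEq_of_eq_of_re_eq_zero {E : Type*} [NormedAddCommGroup E]
    [NormedSpace ℂ E] {g₁ g₂ : ℂ → E} (hg₁ : AnalyticAt ℂ g₁ 0) (hg₂ : AnalyticAt ℂ g₂ 0)
    (h : ∀ᶠ ζ in 𝓝 0, ζ.re = 0 → g₁ ζ = g₂ ζ) : g₁ =ᶠ[𝓝 0] g₂ :=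
  (hg₁.frequently_eq_iff_eventually_eq hg₂).mp <|
    frequently_re_eq_zero_nhdsNE.mp (h.filter_mono nhdsWithin_le_nhds)

theorem AnalyticOnNhd.piecewise_closure {𝕜 E F : Type*} [NontriviallyNormedField 𝕜]
    [NormedAddCommGroup E] [NormedSpace 𝕜 E] [NormedAddCommGroup F] [NormedSpace 𝕜 F]
    {s U : Set E} {f g : E → F} [∀ z, Decidable (z ∈ closure s)]
    (hf : AnalyticOnNhd 𝕜 f (closure s)) (hg : AnalyticOnNhd 𝕜 g (U \ closure s))
    (hfg : ∀ z ∈ frontier s, f =ᶠ[𝓝 z] g) :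
    AnalyticOnNhd 𝕜 ((closure s).piecewise f g) (s ∪ U) := by
  intro z hz
  by_cases hzs : z ∈ closure s
  · refine (hf z hzs).congr ?_
    have hev : ∀ᶠ w in 𝓝 z, w ∈ closure s ∨ f w = g w := by
      rcases (closure_eq_interior_union_frontier s ▸ hzs) with hint | hfr
      · exact Filter.mem_of_superset (mem_interior_iff_mem_nhds.mp hint) fun w hw =>
          Or.inl (subset_closure hw)
      · exact (hfg z hfr).mono fun w hw => Or.inr hw
    filter_upwards [hev] with w hw
    by_cases hws : w ∈ closure s
    · simp [hws]
    · simp [hws, hw.resolve_left hws]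
  · have hzU : z ∈ U := hz.resolve_left fun h => hzs (subset_closure h)
    refine (hg z ⟨hzU, hzs⟩).congr ?_
    filter_upwards [isClosed_closure.isOpen_compl.mem_nhds hzs] with w hw
    simp [piecewise_eq_of_notMem _ _ _ hw]

theorem apply_mem_of_mem_of_same_side {Ω s : Set ℂ} {Φ : ℂ → ℂ} {c a : ℝ}
    (hΦ : ContinuousOn Φ (ball 0 c)) (hfr : ∀ ζ ∈ ball 0 c, Φ ζ ∈ frontier Ω → ζ.re = 0)
    (hs : IsOpen s) (hsΩ : frontier s ⊆ frontier Ω) {ξ ζ : ℂ} (hξ : ξ ∈ ball 0 c)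
    (hξa : 0 < a * ξ.re) (hξs : Φ ξ ∈ s) (hζ : ζ ∈ ball 0 c) (hζa : 0 < a * ζ.re) :
    Φ ζ ∈ s := by
  have hconv : Convex ℝ {η : ℂ | 0 < a * η.re} :=
    (convex_Ioi (0 : ℝ)).linear_preimage (a • reLm)
  have hT : Φ '' (ball 0 c ∩ {η | 0 < a * η.re}) ⊆ s := by
    refine ((convex_ball 0 c).inter hconv).isPreconnected.image Φ (hΦ.mono inter_subset_left)
      |>.subset_of_disjoint_frontier hs ?_ ⟨Φ ξ, mem_image_of_mem Φ ⟨hξ, hξa⟩, hξs⟩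
    refine disjoint_left.mpr ?_
    rintro _ ⟨η, ⟨hη, hηa⟩, rfl⟩ hηs
    simp [hfr η hη (hsΩ hηs)] at hηa
  exact hT (mem_image_of_mem Φ ⟨hζ, hζa⟩)

theorem apply_neg_conj_mem_of_notMem_closure {Ω : Set ℂ} {Φ : ℂ → ℂ} {c : ℝ} (hΩ : IsOpen Ω)
    (hΦ : ContinuousOn Φ (ball 0 c)) (hfr : ∀ ζ ∈ ball 0 c, Φ ζ ∈ frontier Ω ↔ ζ.re = 0)
    {ξ ζ : ℂ} (hξ : ξ ∈ ball 0 c) (hξΩ : Φ ξ ∈ Ω) (hζ : ζ ∈ ball 0 c)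
    (hζΩ : Φ ζ ∉ closure Ω) : Φ (-conj ζ) ∈ Ω := by
  have hfr' : ∀ η ∈ ball 0 c, Φ η ∈ frontier Ω → η.re = 0 := fun η hη => (hfr η hη).mp
  have hξre : ξ.re ≠ 0 := fun h => (hΩ.frontier_eq ▸ (hfr ξ hξ).mpr h).2 hξΩ
  have hζre : ζ.re ≠ 0 := fun h => hζΩ (frontier_subset_closure ((hfr ζ hζ).mpr h))
  -- `Φ` maps each half of the ball into `Ω` or into the exterior; `ζ`'s half goes to the exterior.
  rcases (mul_ne_zero hζre hξre).lt_or_gt with hneg | hpos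
  · refine apply_mem_of_mem_of_same_side (a := -ζ.re) hΦ hfr' hΩ subset_rfl hξ (by linarith) hξΩ
      (by simpa using hζ) ?_
    simpa using mul_self_pos.mpr hζre
  · exact absurd (subset_closure hξΩ) <| apply_mem_of_mem_of_same_side hΦ hfr'
      isClosed_closure.isOpen_compl (frontier_compl_closure_subset Ω) hζ
      (mul_self_pos.mpr hζre) hζΩ hξ hpos

theorem IsAnalyticJordanCurve.nonempty {Γ : Set ℂ} (hΓ : IsAnalyticJordanCurve Γ) :
    Γ.Nonempty := by
  obtain ⟨φ, -, -, -, rfl⟩ := hΓ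
  exact ⟨_, 1, by simp, rfl⟩

lemma mul_exp_mem_sphere_iff {w : ℂ} (hw : ‖w‖ = 1) (ζ : ℂ) :
    w * exp ζ ∈ sphere (0 : ℂ) 1 ↔ ζ.re = 0 := by
  rw [mem_sphere_zero_iff_norm, norm_mul, hw, one_mul, norm_exp, Real.exp_eq_one_iff]

structure IsStraighteningChart (Γ : Set ℂ) (γ : ℂ) (Φ : ℂ → ℂ) : Prop where
  analyticAt : AnalyticAt ℂ Φ 0
  map_zero : Φ 0 = γ
  map_nhds : map Φ (𝓝 0) = 𝓝 γ
  eventually_mem_iff : ∀ᶠ ζ in 𝓝 0, Φ ζ ∈ Γ ↔ ζ.re = 0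

theorem IsAnalyticJordanCurve.exists_isStraighteningChart {Γ : Set ℂ}
    (hΓ : IsAnalyticJordanCurve Γ) {γ : ℂ} (hγ : γ ∈ Γ) : ∃ Φ, IsStraighteningChart Γ γ Φ := by
  obtain ⟨φ, hφan, hφd, hφinj, rfl⟩ := hΓ
  obtain ⟨w₀, hw₀, rfl⟩ := hγ
  have hw₀norm : ‖w₀‖ = 1 := mem_sphere_zero_iff_norm.mp hw₀
  have hφ : HasStrictDerivAt φ (deriv φ w₀) w₀ := (hφan w₀ hw₀).hasStrictDerivAt
  have hexp : HasStrictDerivAt (fun ζ => w₀ * exp ζ) w₀ 0 := by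
    simpa using (hasStrictDerivAt_exp 0).const_mul w₀
  have hΦ : HasStrictDerivAt (fun ζ => φ (w₀ * exp ζ)) (deriv φ w₀ * w₀) 0 := by
    have hφ' : HasStrictDerivAt φ (deriv φ w₀) (w₀ * exp 0) := by simpa using hφ
    exact hφ'.comp 0 hexp
  have hd : deriv φ w₀ * w₀ ≠ 0 := mul_ne_zero (hφd w₀ hw₀) (by simp [← norm_ne_zero_iff, hw₀norm])
  refine ⟨fun ζ => φ (w₀ * exp ζ), ?_, by simp, by simpa using hΦ.map_nhds_eq hd, ?_⟩
  · exact (hφan w₀ hw₀).comp_of_eq (analyticAt_const.mul analyticAt_cexp) (by simp)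
  have hleft := hφ.eventually_left_inverse (hφd w₀ hw₀)
  have hΦt : Tendsto (fun ζ => φ (w₀ * exp ζ)) (𝓝 0) (𝓝 (φ w₀)) := by
    simpa using hΦ.hasDerivAt.continuousAt.tendsto
  have hexpt : Tendsto (fun ζ => w₀ * exp ζ) (𝓝 0) (𝓝 w₀) := by
    simpa using hexp.hasDerivAt.continuousAt.tendsto
  have hnear := hΦt.eventually ((isCompact_sphere 0 1).eventually_mem_of_injOn
    hφan.continuousOn hφinj hw₀ hleft)
  have hexpnear := hexpt.eventually hleft
  filter_upwards [hnear, hexpnear] with ζ hζ hexpζ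
  rw [← mul_exp_mem_sphere_iff hw₀norm]
  refine ⟨?_, mem_image_of_mem φ⟩
  rintro ⟨v, hv, hveq⟩
  rwa [← hexpζ, ← hveq, hζ v hv hveq]

namespace IsStraighteningChart

variable {Γ : Set ℂ} {γ : ℂ} {Φ : ℂ → ℂ}

theorem eventuallyEq_of_eqOn {E : Type*} [NormedAddCommGroup E] [NormedSpace ℂ E]
    (hΦ : IsStraighteningChart Γ γ Φ) {g₁ g₂ : ℂ → E} (hg₁ : AnalyticAt ℂ g₁ γ)
    (hg₂ : AnalyticAt ℂ g₂ γ) (h : EqOn g₁ g₂ Γ) : g₁ =ᶠ[𝓝 γ] g₂ := by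
  rw [← hΦ.map_nhds]
  exact (hg₁.comp_of_eq hΦ.analyticAt hΦ.map_zero).eventuallyEq_of_eq_of_re_eq_zero
    (hg₂.comp_of_eq hΦ.analyticAt hΦ.map_zero)
    (hΦ.eventually_mem_iff.mono fun ζ hζ hre => h (hζ.mpr hre))

theorem eventually_apply_eq_conj_reflect (hΦ : IsStraighteningChart Γ γ Φ) {S : ℂ → ℂ}
    (hS : AnalyticAt ℂ S γ) (hSΓ : ∀ z ∈ Γ, S z = conj z) :
    ∀ᶠ ζ in 𝓝 0, S (Φ ζ) = conj (Φ (-conj ζ)) := by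
  have hrefl : AnalyticAt ℂ (fun ζ => conj (Φ (-conj ζ))) 0 := by
    have h : AnalyticAt ℂ ((conj ∘ Φ ∘ conj) ∘ fun ζ : ℂ => -ζ) 0 :=
      hΦ.analyticAt.conj_conj.comp_of_eq analyticAt_id.neg (by simp)
    simpa [Function.comp_def] using h
  refine (hS.comp_of_eq hΦ.analyticAt hΦ.map_zero).eventuallyEq_of_eq_of_re_eq_zero hrefl ?_
  filter_upwards [hΦ.eventually_mem_iff] with ζ hζ hre
  have hfix : -conj ζ = ζ := by apply Complex.ext <;> simp [hre]
  simp [hfix, hSΓ _ (hζ.mpr hre)]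

theorem eventually_conj_mem_of_notMem_closure {Ω : Set ℂ} (hΩ : IsOpen Ω)
    (hΦ : IsStraighteningChart (frontier Ω) γ Φ) {S : ℂ → ℂ} (hS : AnalyticAt ℂ S γ)
    (hSΓ : ∀ z ∈ frontier Ω, S z = conj z) :
    ∀ᶠ z in 𝓝 γ, z ∉ closure Ω → conj (S z) ∈ Ω := by
  obtain ⟨c, hc, hball⟩ := Metric.eventually_nhds_iff_ball.mp
    ((hΦ.analyticAt.eventually_analyticAt.and hΦ.eventually_mem_iff).and
      (hΦ.eventually_apply_eq_conj_reflect hS hSΓ))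
  have hcont : ContinuousOn Φ (ball 0 c) := fun ζ hζ =>
    (hball ζ hζ).1.1.continuousAt.continuousWithinAt
  have hN : Φ '' ball 0 c ∈ 𝓝 γ := hΦ.map_nhds ▸ image_mem_map (ball_mem_nhds 0 hc)
  have hγ : γ ∈ frontier Ω := hΦ.map_zero ▸ (hball 0 (mem_ball_self hc)).1.2.mpr rfl
  obtain ⟨_, ⟨ξ, hξ, rfl⟩, hξΩ⟩ := mem_closure_iff_nhds.mp (frontier_subset_closure hγ) _ hN
  filter_upwards [hN] with z ⟨ζ, hζ, hζz⟩ hζΩ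
  subst hζz
  rw [(hball ζ hζ).2, conj_conj]
  exact apply_neg_conj_mem_of_notMem_closure hΩ hcont (fun η hη => (hball η hη).1.2) hξ hξΩ
    hζ hζΩ

end IsStraighteningChart

/-- On `Γ`, where `conj ∘ S = id` and `h = Re f` is real, this is `2 Re f - conj f = f`. -/
def schwarzContinuation (S h f : ℂ → ℂ) (z : ℂ) : ℂ :=
  h z + conj (h (conj (S z))) - conj (f (conj (S z)))

theorem analyticAt_schwarzContinuation {S h f : ℂ → ℂ} {z : ℂ} (hS : AnalyticAt ℂ S z)
    (hhz : AnalyticAt ℂ h z) (hhσ : AnalyticAt ℂ h (conj (S z)))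
    (hfσ : AnalyticAt ℂ f (conj (S z))) : AnalyticAt ℂ (schwarzContinuation S h f) z := by
  have hrefl {g : ℂ → ℂ} (hg : AnalyticAt ℂ g (conj (S z))) :
      AnalyticAt ℂ (fun w => conj (g (conj (S w)))) z :=
    hg.conj_conj.comp_of_eq hS (by simp)
  exact (hhz.add (hrefl hhσ)).sub (hrefl hfσ)

theorem schwarzContinuation_eq {S h f : ℂ → ℂ} {z : ℂ} (hS : conj (S z) = z)
    (hh : (h z).im = 0) (hf : (f z).re = (h z).re) : schwarzContinuation S h f z = f z := by
  apply Complex.ext <;> simp [schwarzContinuation, hS, hh]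
  linarith

theorem laplace_solution_extends_across_boundary_general
    (Ω : Set ℂ) (hΩ : IsOpen Ω)
    (Γ : Set ℂ) (hΓ : Γ = frontier Ω) (hΓan : IsAnalyticJordanCurve Γ)
    (U : Set ℂ) (hU : IsOpen U) (hUconn : IsConnected U) (hΓU : Γ ⊆ U)
    (S : ℂ → ℂ) (hS : AnalyticOnNhd ℂ S U)
    (hSΓ : ∀ z ∈ Γ, S z = (starRingEnd ℂ) z)
    (hSU : ∀ z ∈ U, (starRingEnd ℂ) (S z) ∈ U)
    (hSinv : ∀ z ∈ U, (starRingEnd ℂ) (S ((starRingEnd ℂ) (S z))) = z)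
    (h : ℂ → ℂ) (hh : AnalyticOnNhd ℂ h U)
    (hhΓ : ∀ z ∈ Γ, (h z).im = 0)
    (f : ℂ → ℂ) (hf : AnalyticOnNhd ℂ f (closure Ω))
    (hbc : ∀ z ∈ Γ, (f z).re = (h z).re) :
    ∃ F : ℂ → ℂ, AnalyticOnNhd ℂ F (Ω ∪ U) ∧ ∀ z ∈ Ω, F z = f z := by
  classical
  subst hΓ
  have hσΓ : ∀ z ∈ frontier Ω, conj (S z) = z := fun z hz => by rw [hSΓ z hz, conj_conj]
  have hG : ∀ z ∈ U, AnalyticAt ℂ f (conj (S z)) → AnalyticAt ℂ (schwarzContinuation S h f) z :=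
    fun z hz => analyticAt_schwarzContinuation (hS z hz) (hh z hz) (hh _ (hSU z hz))
  have hlocal : ∀ γ ∈ frontier Ω, (∀ᶠ z in 𝓝 γ, z ∉ closure Ω → conj (S z) ∈ Ω) ∧
      f =ᶠ[𝓝 γ] schwarzContinuation S h f := by
    intro γ hγ
    obtain ⟨Φ, hΦ⟩ := hΓan.exists_isStraighteningChart hγ
    have hfγ : AnalyticAt ℂ f γ := hf γ (frontier_subset_closure hγ)
    exact ⟨hΦ.eventually_conj_mem_of_notMem_closure hΩ (hS γ (hΓU hγ)) hSΓ,
      hΦ.eventuallyEq_of_eqOn hfγ (hG γ (hΓU hγ) (by rwa [hσΓ γ hγ]))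
        fun z hz => (schwarzContinuation_eq (hσΓ z hz) (hhΓ z hz) (hbc z hz)).symm⟩
  have hreflect : ∀ z ∈ U, z ∉ closure Ω → conj (S z) ∈ Ω :=
    fun z hzU hz => mem_of_involution_of_eventually_mem hΩ hU hUconn.isPreconnected hΓU
      hΓan.nonempty (continuous_conj.comp_continuousOn hS.continuousOn) hSinv hσΓ
      (fun γ hγ => (hlocal γ hγ).1) hzU hz
  refine ⟨(closure Ω).piecewise f (schwarzContinuation S h f), ?_,
    fun z hz => piecewise_eq_of_mem _ _ _ (subset_closure hz)⟩
  exact hf.piecewise_closure (fun z hz => hG z hz.1 (hf _ (subset_closure (hreflect z hz.1 hz.2))))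
    fun γ hγ => (hlocal γ hγ).2

/-- **Theorem 1 of the paper (analytic continuation of `f` across `Γ`).**
If the boundary data `h` is analytic in a reflection-invariant neighborhood `U` of
the analytic boundary curve `Γ = frontier Ω` and real on `Γ`, and `f` is analytic on
`closure Ω` with `Re f = h` on `Γ`, then `f` extends analytically to `Ω ∪ U`
(in particular to the part of `U` exterior to `Γ`). -/
theorem laplace_solution_extends_across_boundary
    (Ω : Set ℂ) (hΩ : IsOpen Ω) (hΩconn : IsConnected Ω)
    (hΩbd : Bornology.IsBounded Ω)
    (Γ : Set ℂ) (hΓ : Γ = frontier Ω) (hΓan : IsAnalyticJordanCurve Γ)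
    (U : Set ℂ) (hU : IsOpen U) (hUconn : IsConnected U) (hΓU : Γ ⊆ U)
    (S : ℂ → ℂ) (hS : AnalyticOnNhd ℂ S U)
    (hSΓ : ∀ z ∈ Γ, S z = (starRingEnd ℂ) z)
    (hSU : ∀ z ∈ U, (starRingEnd ℂ) (S z) ∈ U)
    (hSinv : ∀ z ∈ U, (starRingEnd ℂ) (S ((starRingEnd ℂ) (S z))) = z)
    (h : ℂ → ℂ) (hh : AnalyticOnNhd ℂ h U)
    (hhΓ : ∀ z ∈ Γ, (h z).im = 0)
    (f : ℂ → ℂ) (hf : AnalyticOnNhd ℂ f (closure Ω))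
    (hbc : ∀ z ∈ Γ, (f z).re = (h z).re) :
    ∃ F : ℂ → ℂ, AnalyticOnNhd ℂ F (Ω ∪ U) ∧ ∀ z ∈ Ω, F z = f z :=
  laplace_solution_extends_across_boundary_general Ω hΩ Γ hΓ hΓan U hU hUconn hΓU S hS hSΓ hSU hSinv
    h hh hhΓ f hf hbc
end

section
/- The function S(z) = ((ρ² + ρ⁻²)/2)·z − ((ρ² − ρ⁻²)/2)·√(z² − 1) satisfies S(z) = conj(z) for every point z on the ρ-ellipse E_ρ, i.e., for every z of the form (ρe^{iθ} + ρ⁻¹e^{−iθ})/2 with θ ∈ [0, 2π). -/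
open Complex

/-- **Schwarz function of the ρ-ellipse.** For `ρ > 1` and any point
`z = (ρ e^{iθ} + ρ⁻¹ e^{-iθ})/2` on the ρ-ellipse, with the branch of the square root
given by `w = (ρ e^{iθ} − ρ⁻¹ e^{-iθ})/2` (so `w² = z² − 1`, the branch with
`√(z²−1) ~ z` at `∞`), the Schwarz function
`S(z) = ((ρ² + ρ⁻²)/2) z − ((ρ² − ρ⁻²)/2) w` satisfies `S(z) = conj z`. -/
theorem schwarz_function_of_ellipse (ρ : ℝ) (hρ : 1 < ρ) (θ : ℝ)
    (z w : ℂ)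
    (hz : z = ((ρ : ℂ) * exp (θ * I) + (ρ : ℂ)⁻¹ * exp (-(θ * I))) / 2)
    (hw : w = ((ρ : ℂ) * exp (θ * I) - (ρ : ℂ)⁻¹ * exp (-(θ * I))) / 2) :
    w ^ 2 = z ^ 2 - 1 ∧
    (((ρ : ℂ) ^ 2 + (ρ : ℂ) ^ (-2 : ℤ)) / 2) * z
      - (((ρ : ℂ) ^ 2 - (ρ : ℂ) ^ (-2 : ℤ)) / 2) * w = (starRingEnd ℂ) z := by
  have hρ0 : (ρ : ℂ) ≠ 0 := by
    exact_mod_cast ne_of_gt (lt_trans one_pos hρ)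
  have he : exp (θ * I) ≠ 0 := exp_ne_zero _
  have hconj : (starRingEnd ℂ) (exp (θ * I)) = exp (-(θ * I)) := by
    rw [← exp_conj]
    congr 1
    simp [Complex.conj_I]
  have hexpneg : exp (-(θ * I)) = (exp (θ * I))⁻¹ := exp_neg _
  subst hz hw
  constructor
  · rw [hexpneg]
    field_simp
    ring
  · have hconj2 : (starRingEnd ℂ) (exp (-(θ * I))) = exp (θ * I) := by
      rw [← exp_conj]; congr 1; simp [Complex.conj_I]
    rw [map_div₀, map_add, map_mul, map_mul, map_inv₀, hconj2, hconj, Complex.conj_ofReal,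
      map_ofNat, hexpneg]
    rw [show ((ρ:ℂ)^(-2:ℤ)) = ((ρ:ℂ)⁻¹)^(2:ℕ) by
      rw [zpow_neg, ← inv_zpow, zpow_two, sq]]
    field_simp
    ring
end

section
/- For a > 0, define A(a) = Σ_{k∈ℤ} exp(−a k²) and B(a) = Σ_{k∈ℤ} exp(−a (k + 1/2)²). Then A(a)/B(a) − 1 ~ 4·exp(−π²/a) as a → 0⁺, i.e., (A(a)/B(a) − 1)/exp(−π²/a) → 4. -/
/-!
By Poisson summation (the functional equation of the even Hurwitz kernel), with `T = π² / a`
both sums are `√(π / a)` times a theta series in `T`: `A` becomes `Σ e^{-T n²}` and `B` becomes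
`Σ cos (π n) e^{-T n²}` (note `cos (π n) = (-1)^n`). Hence `A / B - 1` is
`Σ (1 - cos (π n)) e^{-T n²}` divided by the alternating series. As `T → ∞`, dominated
convergence shows that the alternating series tends to its `n = 0` term `1`, while the numerator,
rescaled by `e^{T}`, tends to the sum `4` of its `n = ±1` terms.
-/

open Real Filter Topology HurwitzZeta

theorem summable_exp_neg_mul_int_sq {t : ℝ} (ht : 0 < t) :
    Summable fun n : ℤ => exp (-t * n ^ 2) := by
  convert (hasSum_int_evenKernel 0 (div_pos ht pi_pos)).summable using 3 with n
  field_simp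
  simp

theorem summable_cos_mul_exp_neg_mul_int_sq (c : ℤ → ℝ) {t : ℝ} (ht : 0 < t) :
    Summable fun n : ℤ => cos (c n) * exp (-t * n ^ 2) :=
  (summable_exp_neg_mul_int_sq ht).of_norm_bounded fun n => by
    rw [norm_mul, norm_of_nonneg (exp_pos _).le]
    exact mul_le_of_le_one_left (exp_pos _).le (abs_cos_le_one _)

theorem tsum_exp_neg_mul_int_add_sq (c : ℝ) {t : ℝ} (ht : 0 < t) :
    ∑' n : ℤ, exp (-t * (n + c) ^ 2) =
      √(π / t) * ∑' n : ℤ, cos (2 * π * c * n) * exp (-(π ^ 2 / t) * n ^ 2) := by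
  have hx : 0 < t / π := div_pos ht pi_pos
  have hcos : HasSum (fun n : ℤ => cos (2 * π * c * n) * exp (-(π ^ 2 / t) * n ^ 2))
      (cosKernel c (π / t)) := by
    convert Complex.hasSum_re (hasSum_int_cosKernel c (div_pos pi_pos ht)) using 1
    · ext n
      have harg : 2 * π * Complex.I * c * n = ((2 * π * c * n : ℝ) : ℂ) * Complex.I := by
        push_cast
        ring
      rw [harg, Complex.re_mul_ofReal, Complex.exp_ofReal_mul_I_re]
      congr 2
      ring
    · rfl
  have heven : HasSum (fun n : ℤ => exp (-t * (n + c) ^ 2)) (evenKernel c (t / π)) := by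
    convert hasSum_int_evenKernel c hx using 3 with n
    field_simp
  rw [heven.tsum_eq, hcos.tsum_eq, evenKernel_functional_equation, one_div_div, sqrt_eq_rpow,
    one_div (_ ^ _), ← inv_rpow hx.le, inv_div]

theorem tendsto_tsum_mul_exp_neg_mul_atTop {ι : Type*} {a l : ι → ℝ} (t₀ : ℝ)
    (hl : ∀ i, a i ≠ 0 → 0 ≤ l i) (hs : Summable fun i => a i * exp (-t₀ * l i)) :
    Tendsto (fun t => ∑' i, a i * exp (-t * l i)) atTop
      (𝓝 (∑' i, if l i = 0 then a i else 0)) := by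
  refine tendsto_tsum_of_dominated_convergence hs.norm (fun i => ?_) ?_
  · rcases lt_trichotomy (l i) 0 with hneg | hzero | hpos
    · have : a i = 0 := by_contra fun h => (hl i h).not_gt hneg
      simp [this]
    · simp [hzero]
    · rw [if_neg hpos.ne', ← mul_zero (a i)]
      refine tendsto_const_nhds.mul ?_
      exact (tendsto_exp_neg_atTop_nhds_zero.comp (tendsto_id.atTop_mul_const hpos)).congr
        fun t => by simp [neg_mul]
  · filter_upwards [eventually_ge_atTop t₀] with t ht i
    rw [norm_mul, norm_mul, norm_of_nonneg (exp_pos _).le, norm_of_nonneg (exp_pos _).le]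
    by_cases h : a i = 0
    · simp [h]
    · gcongr
      nlinarith [hl i h]

theorem tendsto_tsum_cos_pi_mul_exp_neg_mul_int_sq :
    Tendsto (fun t => ∑' n : ℤ, cos (π * n) * exp (-t * n ^ 2)) atTop (𝓝 1) := by
  have hlim := tendsto_tsum_mul_exp_neg_mul_atTop (a := fun n : ℤ => cos (π * n))
    (l := fun n : ℤ => (n : ℝ) ^ 2) 1 (fun n _ => sq_nonneg _)
    (summable_cos_mul_exp_neg_mul_int_sq _ one_pos)
  rwa [tsum_eq_single 0 fun n hn => if_neg (by simpa using hn), if_pos (by simp),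
    Int.cast_zero, mul_zero, cos_zero] at hlim

theorem hasSum_one_sub_cos_mul_exp_neg_mul_int_sq_sub_one {t : ℝ} (ht : 0 < t) :
    HasSum (fun n : ℤ => (1 - cos (π * n)) * exp (-t * (n ^ 2 - 1)))
      ((∑' n : ℤ, exp (-t * n ^ 2) - ∑' n : ℤ, cos (π * n) * exp (-t * n ^ 2)) /
        exp (-t)) := by
  refine (((summable_exp_neg_mul_int_sq ht).hasSum.sub
    (summable_cos_mul_exp_neg_mul_int_sq _ ht).hasSum).div_const _).congr_fun fun n => ?_
  rw [mul_sub, mul_one, exp_sub]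
  ring

theorem tendsto_tsum_exp_neg_mul_int_sq_sub_tsum_cos_pi_mul_div_exp :
    Tendsto (fun t => (∑' n : ℤ, exp (-t * n ^ 2) -
      ∑' n : ℤ, cos (π * n) * exp (-t * n ^ 2)) / exp (-t)) atTop (𝓝 4) := by
  have hl (n : ℤ) (hn : 1 - cos (π * n) ≠ 0) : 0 ≤ (n : ℝ) ^ 2 - 1 := by
    have hn0 : n ≠ 0 := by rintro rfl; simp at hn
    have hsq : 1 ≤ n ^ 2 := sq_pos_of_ne_zero hn0
    rw [sub_nonneg]
    exact_mod_cast hsq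
  have hlim := tendsto_tsum_mul_exp_neg_mul_atTop (a := fun n : ℤ => 1 - cos (π * n))
    (l := fun n : ℤ => (n : ℝ) ^ 2 - 1) 1 hl
    (hasSum_one_sub_cos_mul_exp_neg_mul_int_sq_sub_one one_pos).summable
  have hval : ∑' n : ℤ, (if (n : ℝ) ^ 2 - 1 = 0 then 1 - cos (π * n) else 0) = 4 := by
    rw [tsum_eq_sum (s := {1, -1}) fun n hn => if_neg ?_, Finset.sum_pair (by norm_num)]
    · norm_num
    · rw [sub_eq_zero, sq_eq_one_iff]
      exact_mod_cast (by simpa using hn)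
  rw [hval] at hlim
  refine hlim.congr' ?_
  filter_upwards [eventually_gt_atTop 0] with t ht
  exact (hasSum_one_sub_cos_mul_exp_neg_mul_int_sq_sub_one ht).tsum_eq

theorem tendsto_tsum_exp_neg_mul_int_sq_div_tsum_cos_pi_mul_sub_one_div_exp :
    Tendsto (fun t => ((∑' n : ℤ, exp (-t * n ^ 2)) /
      (∑' n : ℤ, cos (π * n) * exp (-t * n ^ 2)) - 1) / exp (-t)) atTop (𝓝 4) := by
  have h := tendsto_tsum_exp_neg_mul_int_sq_sub_tsum_cos_pi_mul_div_exp.div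
    tendsto_tsum_cos_pi_mul_exp_neg_mul_int_sq one_ne_zero
  rw [div_one] at h
  refine h.congr' ?_
  filter_upwards [tendsto_tsum_cos_pi_mul_exp_neg_mul_int_sq.eventually_ne one_ne_zero]
    with t ht
  rw [Pi.div_apply, div_sub_one ht, div_div, div_div, mul_comm]

/-- **Asymptotics of the theta-function ratio (Theorem 5 of the paper, key step).**
With `A(a) = Σ_{k∈ℤ} e^{−ak²}` and `B(a) = Σ_{k∈ℤ} e^{−a(k+1/2)²}`, we have
`A(a)/B(a) − 1 ~ 4 e^{−π²/a}` as `a → 0⁺`. -/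
theorem theta_ratio_asymptotics :
    Tendsto
      (fun a : ℝ =>
        ((∑' k : ℤ, Real.exp (-a * (k : ℝ) ^ 2)) /
            (∑' k : ℤ, Real.exp (-a * ((k : ℝ) + 1 / 2) ^ 2)) - 1) /
          Real.exp (-(π ^ 2) / a))
      (nhdsWithin 0 (Set.Ioi 0)) (nhds 4) := by
  have hT : Tendsto (fun a : ℝ => π ^ 2 / a) (𝓝[>] 0) atTop :=
    (tendsto_inv_nhdsGT_zero.const_mul_atTop (by positivity)).congr fun a =>
      (div_eq_mul_inv _ _).symm
  refine (tendsto_tsum_exp_neg_mul_int_sq_div_tsum_cos_pi_mul_sub_one_div_exp.comp hT).congr' ?_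
  filter_upwards [self_mem_nhdsWithin] with a (ha : 0 < a)
  have hA := tsum_exp_neg_mul_int_add_sq 0 ha
  have hB := tsum_exp_neg_mul_int_add_sq (1 / 2) ha
  simp only [add_zero, mul_zero, zero_mul, cos_zero, one_mul] at hA
  simp only [mul_one_div, mul_div_cancel_left₀ _ (two_ne_zero' ℝ)] at hB
  rw [Function.comp_apply, hA, hB, mul_div_mul_left _ _ (by positivity), neg_div]
end

section
/- For a > 0, Σ_{k∈ℤ} exp(−a (k + 1/2)²) = √(π/a) · Σ_{k∈ℤ} (−1)^k exp(−π² k²/a). -/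
open Real

/-- **Poisson summation for the shifted Gaussian.**
For `a > 0`, `Σ_{k∈ℤ} e^{−a(k+1/2)²} = √(π/a) · Σ_{k∈ℤ} (−1)^k e^{−π²k²/a}`. -/
theorem shifted_gaussian_poisson_summation (a : ℝ) (ha : 0 < a) :
    ∑' k : ℤ, Real.exp (-a * ((k : ℝ) + 1 / 2) ^ 2) =
      Real.sqrt (π / a) *
        ∑' k : ℤ, (-1 : ℝ) ^ k * Real.exp (-(π ^ 2) * (k : ℝ) ^ 2 / a) := by
  have hπa : (0 : ℝ) < π / a := div_pos pi_pos ha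
  have ha' : (a : ℂ) ≠ 0 := by exact_mod_cast ha.ne'
  have hπ : (π : ℂ) ≠ 0 := by exact_mod_cast Real.pi_ne_zero
  have key := Complex.tsum_exp_neg_quadratic
    (a := ((π / a : ℝ) : ℂ)) (by simpa using hπa) (-Complex.I / 2)
  have hL : ∀ n : ℤ,
      Complex.exp (-↑π * ((π / a : ℝ) : ℂ) * (n : ℂ) ^ 2 + 2 * ↑π * (-Complex.I / 2) * (n : ℂ))
        = (((-1 : ℝ) ^ n * Real.exp (-(π ^ 2) * (n : ℝ) ^ 2 / a) : ℝ) : ℂ) := by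
    intro n
    have e1 : (-↑π * ((π / a : ℝ) : ℂ) * (n : ℂ) ^ 2 + 2 * ↑π * (-Complex.I / 2) * (n : ℂ))
        = ((-(π ^ 2) * (n : ℝ) ^ 2 / a : ℝ) : ℂ) + (n : ℂ) * (-(↑π * Complex.I)) := by
      push_cast
      field_simp
    have e2 : Complex.exp (-(↑π * Complex.I)) = -1 := by
      rw [Complex.exp_neg, Complex.exp_pi_mul_I]; norm_num
    rw [e1, Complex.exp_add, Complex.exp_int_mul, e2]
    push_cast
    ring
  have hR : ∀ n : ℤ,
      Complex.exp (-↑π / ((π / a : ℝ) : ℂ) * ((n : ℂ) + Complex.I * (-Complex.I / 2)) ^ 2)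
        = ((Real.exp (-a * ((n : ℝ) + 1 / 2) ^ 2) : ℝ) : ℂ) := by
    intro n
    have e1 : -↑π / ((π / a : ℝ) : ℂ) = -(a : ℂ) := by
      push_cast; field_simp
    have e2 : (n : ℂ) + Complex.I * (-Complex.I / 2) = (n : ℂ) + 1 / 2 := by
      have : Complex.I * (-Complex.I / 2) = 1 / 2 := by
        rw [← mul_div_assoc, mul_neg, Complex.I_mul_I]; norm_num
      rw [this]
    rw [e1, e2]
    push_cast
    ring_nf
  have hpow : (((π / a : ℝ) : ℂ)) ^ (1 / 2 : ℂ) = ((Real.sqrt (π / a) : ℝ) : ℂ) := by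
    rw [Real.sqrt_eq_rpow, Complex.ofReal_cpow hπa.le]
    norm_num
  rw [tsum_congr hL, tsum_congr hR, hpow, ← Complex.ofReal_tsum, ← Complex.ofReal_tsum] at key
  have hs : (0 : ℝ) < Real.sqrt (π / a) := Real.sqrt_pos.mpr hπa
  have key2 : (∑' k : ℤ, (-1 : ℝ) ^ k * Real.exp (-(π ^ 2) * (k : ℝ) ^ 2 / a))
      = 1 / Real.sqrt (π / a) * ∑' k : ℤ, Real.exp (-a * ((k : ℝ) + 1 / 2) ^ 2) := by
    exact_mod_cast key
  rw [key2]
  field_simp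
  ring
end

section
/- For ρ > 1, R(ρ) > 1, where R(ρ) = (Σ_{k∈ℤ} ρ^{−4k²}) / (Σ_{k∈ℤ} ρ^{−4(k+1/2)²}). -/
/-!
By Poisson summation (the functional equation of the Jacobi theta function),
`∑ₙ exp (-c (n + a)²) = √(π / c) ∑ₙ cos (2π a n) exp (-π² n² / c)`.
The shift `a` enters only through the phases `cos (2π a n) ≤ 1`, and the phase at `n = 1` is
strictly less than `1` unless `a ∈ ℤ`. So every non-integral shift strictly decreases the
Gaussian lattice sum; take `a = 1 / 2` and `c = 4 log ρ`.
-/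

open Real HurwitzZeta

lemma cosKernel_lt_cosKernel_zero {a : ℝ} (ha : (a : UnitAddCircle) ≠ 0) {t : ℝ} (ht : 0 < t) :
    cosKernel a t < cosKernel 0 t := by
  have hcos : Real.cos (2 * π * a) < 1 := by
    refine (cos_le_one _).lt_of_ne fun h => ha ?_
    obtain ⟨n, hn⟩ := (Real.cos_eq_one_iff _).mp h
    refine (AddCircle.coe_eq_zero_iff 1).mpr ⟨n, ?_⟩
    rw [zsmul_one]
    nlinarith [pi_pos]
  have hlt := hasSum_lt (i := 0) (fun n => ?_) ?_ (hasSum_nat_cosKernel₀ a ht)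
    (hasSum_nat_cosKernel₀ 0 ht)
  · simpa using hlt
  · gcongr
    simpa using cos_le_one _
  · gcongr ?_ * _
    simpa using hcos

lemma evenKernel_lt_evenKernel_zero {a : ℝ} (ha : (a : UnitAddCircle) ≠ 0) {t : ℝ} (ht : 0 < t) :
    evenKernel a t < evenKernel 0 t := by
  rw [evenKernel_functional_equation, evenKernel_functional_equation]
  exact mul_lt_mul_of_pos_left (cosKernel_lt_cosKernel_zero ha (by positivity)) (by positivity)

lemma evenKernel_pos (a : ℝ) {t : ℝ} (ht : 0 < t) : 0 < evenKernel a t :=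
  hasSum_lt (f := 0) (i := 0) (fun _ => (exp_pos _).le) (exp_pos _) hasSum_zero
    (hasSum_int_evenKernel a ht)

lemma hasSum_int_exp_neg_mul_add_sq (a : ℝ) {c : ℝ} (hc : 0 < c) :
    HasSum (fun n : ℤ => rexp (-c * (n + a) ^ 2)) (evenKernel a (c / π)) := by
  convert hasSum_int_evenKernel a (div_pos hc pi_pos) using 3
  field_simp

/-- **The analyticity radius exceeds 1.** For `ρ > 1`,
`R(ρ) = (Σ_{k∈ℤ} ρ^{−4k²}) / (Σ_{k∈ℤ} ρ^{−4(k+1/2)²}) > 1`. -/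
theorem analyticity_radius_gt_one (ρ : ℝ) (hρ : 1 < ρ) :
    1 < (∑' k : ℤ, ρ ^ (-(4 * (k : ℝ) ^ 2))) /
        (∑' k : ℤ, ρ ^ (-(4 * ((k : ℝ) + 1 / 2) ^ 2))) := by
  have hc : 0 < 4 * log ρ := by have := log_pos hρ; positivity
  have hterm (y : ℝ) : ρ ^ (-(4 * y)) = rexp (-(4 * log ρ) * y) := by
    rw [rpow_def_of_pos (by linarith)]; ring_nf
  have hnum := hasSum_int_exp_neg_mul_add_sq 0 hc
  have hden := hasSum_int_exp_neg_mul_add_sq (1 / 2) hc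
  simp only [add_zero, ← hterm] at hnum hden
  have hhalf : ((1 / 2 : ℝ) : UnitAddCircle) ≠ 0 := by
    rw [Ne, AddCircle.coe_eq_zero_iff_of_mem_Ico (by norm_num)]
    norm_num
  rw [hnum.tsum_eq, hden.tsum_eq, one_lt_div (evenKernel_pos _ (by positivity))]
  simpa using evenKernel_lt_evenKernel_zero hhalf (div_pos hc pi_pos)
end
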